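/- arXiv:1810.02144 — 2 statements merged into one kernel-verified Lean document; each statement's English description precedes it below -/
import Mathlib

section
/- A non-autonomous dynamical system (X, f_{1,∞}) is weakly mixing of all orders if and only if the induced non-autonomous system on the space of Borel probability measures M(X) is weakly mixing of all orders. -/
open Set Filter MeasureTheory TopologicalSpace

/-- `iterN f n = f_{n-1} ∘ ⋯ ∘ f_0`, the `n`-th iterate of the non-autonomous system. -/
def iterN {X : Type*} (f : ℕ → X → X) : ℕ → X → X
  | 0 => id
  | n + 1 => f n ∘ iterN f n

/-- Topological transitivity of a non-autonomous system. -/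
def NATransitive {X : Type*} [TopologicalSpace X] (f : ℕ → X → X) : Prop :=
  ∀ U V : Set X, IsOpen U → IsOpen V → U.Nonempty → V.Nonempty →
    ∃ n : ℕ, 0 < n ∧ (iterN f n '' U ∩ V).Nonempty

/-- Weak mixing (order 2). -/
def NAWeaklyMixing {X : Type*} [TopologicalSpace X] (f : ℕ → X → X) : Prop :=
  ∀ U₁ U₂ V₁ V₂ : Set X, IsOpen U₁ → IsOpen U₂ → IsOpen V₁ → IsOpen V₂ →
    U₁.Nonempty → U₂.Nonempty → V₁.Nonempty → V₂.Nonempty →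
    ∃ n : ℕ, 0 < n ∧ (iterN f n '' U₁ ∩ V₁).Nonempty ∧ (iterN f n '' U₂ ∩ V₂).Nonempty

/-- Weak mixing of order `m`. -/
def NAWeaklyMixingOrder {X : Type*} [TopologicalSpace X] (f : ℕ → X → X) (m : ℕ) : Prop :=
  ∀ U V : Fin m → Set X, (∀ i, IsOpen (U i)) → (∀ i, IsOpen (V i)) →
    (∀ i, (U i).Nonempty) → (∀ i, (V i).Nonempty) →
    ∃ n : ℕ, 0 < n ∧ ∀ i, (iterN f n '' U i ∩ V i).Nonempty

/-- Banks's condition. -/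
def NABanks {X : Type*} [TopologicalSpace X] (f : ℕ → X → X) : Prop :=
  ∀ U V W : Set X, IsOpen U → IsOpen V → IsOpen W →
    U.Nonempty → V.Nonempty → W.Nonempty →
    ∃ n : ℕ, 0 < n ∧ (iterN f n '' U ∩ V).Nonempty ∧ (iterN f n '' U ∩ W).Nonempty

/-- Topological mixing. -/
def NAMixing {X : Type*} [TopologicalSpace X] (f : ℕ → X → X) : Prop :=
  ∀ U V : Set X, IsOpen U → IsOpen V → U.Nonempty → V.Nonempty →
    ∃ N : ℕ, ∀ n ≥ N, (iterN f n '' U ∩ V).Nonempty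

/-- `blockC f s k = f_{s+k-1} ∘ ⋯ ∘ f_s`. -/
def blockC {X : Type*} (f : ℕ → X → X) (s k : ℕ) : X → X :=
  iterN (fun i => f (s + i)) k

/-- The `k`-th iterate system `f_{1,∞}^{[k]}`. -/
def kthSys {X : Type*} (f : ℕ → X → X) (k : ℕ) : ℕ → X → X :=
  fun n => blockC f (n * k) k

/-- The induced non-autonomous system on Borel probability measures (pushforwards). -/
noncomputable def inducedM {X : Type*} [MeasurableSpace X] [TopologicalSpace X]
    [BorelSpace X] (f : ℕ → X → X) (hf : ∀ n, Continuous (f n)) :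
    ℕ → ProbabilityMeasure X → ProbabilityMeasure X :=
  fun n μ => μ.map ((hf n).measurable.aemeasurable)

/-- The induced non-autonomous system on the hyperspace of non-empty compact subsets. -/
def inducedK {X : Type*} [TopologicalSpace X] (f : ℕ → X → X) (hf : ∀ n, Continuous (f n)) :
    ℕ → NonemptyCompacts X → NonemptyCompacts X :=
  fun n K => ⟨⟨f n '' (K : Set X), K.isCompact.image (hf n)⟩, K.nonempty.image _⟩

/-- The set `N(U, δ)` of sensitivity times. -/
def NSet {X : Type*} [PseudoMetricSpace X] (f : ℕ → X → X) (U : Set X) (δ : ℝ) : Set ℕ :=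
  {n | 0 < n ∧ ∃ x ∈ U, ∃ y ∈ U, δ < dist (iterN f n x) (iterN f n y)}

/-- Sensitive dependence on initial conditions. -/
def NASensitive {X : Type*} [PseudoMetricSpace X] (f : ℕ → X → X) : Prop :=
  ∃ δ : ℝ, 0 < δ ∧ ∀ x : X, ∀ U : Set X, IsOpen U → x ∈ U →
    ∃ y ∈ U, ∃ n : ℕ, 0 < n ∧ δ < dist (iterN f n x) (iterN f n y)

/-- A thick subset of ℕ. -/
def ThickSet (S : Set ℕ) : Prop := ∀ p : ℕ, ∃ n : ℕ, ∀ j ≤ p, n + j ∈ S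

/-- A syndetic subset of ℕ. -/
def SyndeticSet (S : Set ℕ) : Prop := ∃ a : ℕ, ∀ i : ℕ, ∃ j, i ≤ j ∧ j ≤ i + a ∧ j ∈ S

/-- Upper density of a subset of ℕ. -/
noncomputable def upperDens (S : Set ℕ) : ℝ :=
  Filter.limsup (fun n : ℕ => (Nat.card ↥(S ∩ Set.Iio n) : ℝ) / n) Filter.atTop

/-- Periodic point of a non-autonomous system. -/
def NAPeriodicPt {X : Type*} (f : ℕ → X → X) (x : X) : Prop :=
  ∃ n : ℕ, 0 < n ∧ ∀ k : ℕ, 0 < k → iterN f (n * k) x = x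

/-
Backward direction: for open `G ⊆ X` the measures giving `G` mass `> 1/2` form an open set of
`M(X)` containing the Dirac masses at points of `G`, and a measure that is heavy on `U` and whose
`n`-th image is heavy on `V` must charge `U ∩ (f_1^n)⁻¹ V`.

Forward direction: uniform (empirical) measures `(1/r) ∑ δ_{x_j}` depend continuously on their
atoms and, for every large enough `r`, approximate a given measure in the Lévy–Prokhorov metric
(push the mass onto a finite `δ`-net, then round the weights to multiples of `1/r`). So a non-empty
open set of `M(X)` contains every uniform measure whose atoms lie in some box `W_1 × ⋯ × W_r` of
non-empty open sets. Choosing one `r` for all `2m` open sets, weak mixing of order `m r` applied to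
the boxes moves `m` uniform measures into their targets at the same time.
-/

open Metric Finset
open scoped ENNReal NNReal

section Empirical

variable {X ι : Type*} [MeasurableSpace X] [Fintype ι]

noncomputable def empiricalMeasure (z : ι → X) : Measure X :=
  (Fintype.card ι : ℝ≥0∞)⁻¹ • ∑ i, Measure.dirac (z i)

lemma empiricalMeasure_apply (z : ι → X) {s : Set X} (hs : MeasurableSet s) :
    empiricalMeasure z s = (Fintype.card ι : ℝ≥0∞)⁻¹ * ∑ i, s.indicator 1 (z i) := by
  simp [empiricalMeasure, Measure.finsetSum_apply, Measure.dirac_apply' _ hs]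

instance isProbabilityMeasure_empiricalMeasure [Nonempty ι] (z : ι → X) :
    IsProbabilityMeasure (empiricalMeasure z) := by
  constructor
  rw [empiricalMeasure_apply z MeasurableSet.univ]
  simp [ENNReal.inv_mul_cancel]

lemma map_empiricalMeasure {Y : Type*} [MeasurableSpace Y] {g : X → Y} (hg : Measurable g)
    (z : ι → X) : (empiricalMeasure z).map g = empiricalMeasure (g ∘ z) := by
  ext s hs
  rw [Measure.map_apply hg hs, empiricalMeasure_apply _ (hg hs), empiricalMeasure_apply _ hs]
  rfl

lemma exists_empiricalMeasure_eq_sum_nsmul_dirac (c : ℕ → X) {N : ℕ} {k : ℕ → ℕ}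
    (hk : ∑ j ∈ range N, k j = Fintype.card ι) :
    ∃ z : ι → X, empiricalMeasure z =
      (Fintype.card ι : ℝ≥0∞)⁻¹ • ∑ j ∈ range N, k j • Measure.dirac (c j) := by
  have hcard : Fintype.card ι = Fintype.card (Σ j : Fin N, Fin (k j)) := by
    simp [Fintype.card_sigma, Fin.sum_univ_eq_sum_range, hk]
  let e := Fintype.equivOfCardEq hcard
  refine ⟨fun t => c (e t).1, ?_⟩
  rw [empiricalMeasure, e.sum_comp (fun x => Measure.dirac (c x.1)), Fintype.sum_sigma,
    ← Fin.sum_univ_eq_sum_range (fun j => k j • Measure.dirac (c j))]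
  simp

lemma map_comp_eq_sum_smul_dirac (μ : Measure X) {σ : X → ℕ} (hσ : Measurable σ) {N : ℕ}
    (hN : ∀ x, σ x < N) (c : ℕ → X) :
    μ.map (c ∘ σ) = ∑ j ∈ range N, μ (σ ⁻¹' {j}) • Measure.dirac (c j) := by
  classical
  ext s hs
  have hpre : (c ∘ σ) ⁻¹' s = σ ⁻¹' ↑((range N).filter (c · ∈ s)) := by
    ext x; simp [hN x]
  rw [Measure.map_apply (measurable_from_nat.comp hσ) hs, hpre,
    ← sum_measure_preimage_singleton _ fun j _ => hσ (measurableSet_singleton j),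
    Measure.finsetSum_apply, sum_filter]
  refine sum_congr rfl fun j _ => ?_
  by_cases hj : c j ∈ s <;> simp [hj, Measure.dirac_apply' _ hs]

variable [Nonempty ι]

noncomputable def empiricalProba (z : ι → X) : ProbabilityMeasure X :=
  ⟨empiricalMeasure z, inferInstance⟩

lemma continuous_empiricalProba [TopologicalSpace X] [OpensMeasurableSpace X] :
    Continuous (empiricalProba : (ι → X) → ProbabilityMeasure X) := by
  refine ProbabilityMeasure.continuous_iff_forall_continuous_lintegral.2 fun g => ?_
  have hcard : (Fintype.card ι : ℝ≥0∞)⁻¹ ≠ ∞ := by simp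
  have hg : Continuous fun x => (g x : ℝ≥0∞) := ENNReal.continuous_coe.comp g.continuous
  simp only [empiricalProba, ProbabilityMeasure.coe_mk, empiricalMeasure,
    lintegral_smul_measure, lintegral_finsetSum_measure, lintegral_dirac' _ hg.measurable]
  exact ENNReal.continuous_const_mul hcard |>.comp <| continuous_finsetSum _ fun i _ =>
    hg.comp <| continuous_apply i

end Empirical

lemma exists_sum_range_eq_and_mul_lt_add_one {N : ℕ} {p : ℕ → ℝ≥0}
    (hp : ∑ j ∈ range N, p j = 1) (r : ℕ) :
    ∃ k : ℕ → ℕ, ∑ j ∈ range N, k j = r ∧ ∀ j, r * p j < k j + 1 := by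
  -- cumulative floors: `k j = ⌊F (j + 1)⌋₊ - ⌊F j⌋₊` with `F j = r * ∑ i < j, p i`
  set F : ℕ → ℝ≥0 := fun j => r * ∑ i ∈ range j, p i
  have hF : Monotone fun j => ⌊F j⌋₊ := fun i j hij =>
    Nat.floor_le_floor <| mul_le_mul_right (sum_le_sum_of_subset (range_mono hij)) _
  refine ⟨fun j => ⌊F (j + 1)⌋₊ - ⌊F j⌋₊, ?_, fun j => ?_⟩
  · simp [sum_range_tsub hF, F, hp]
  · have hk : ((⌊F (j + 1)⌋₊ - ⌊F j⌋₊ : ℕ) : ℝ≥0) + ⌊F j⌋₊ = ⌊F (j + 1)⌋₊ := by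
      rw [← Nat.cast_add, Nat.sub_add_cancel (hF j.le_succ)]
    refine lt_of_add_lt_add_right (a := F j) ?_
    calc r * p j + F j = F (j + 1) := by simp only [F, sum_range_succ]; ring
      _ < ⌊F (j + 1)⌋₊ + 1 := Nat.lt_floor_add_one _
      _ = (⌊F (j + 1)⌋₊ - ⌊F j⌋₊ : ℕ) + ⌊F j⌋₊ + 1 := by rw [hk]
      _ ≤ (⌊F (j + 1)⌋₊ - ⌊F j⌋₊ : ℕ) + 1 + F j := by
        rw [add_right_comm]; gcongr; exact Nat.floor_le (F j).2

lemma exists_sum_range_eq_and_measure_preimage_le {X : Type*} [MeasurableSpace X]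
    (μ : Measure X) [IsProbabilityMeasure μ]
    {σ : X → ℕ} (hσ : Measurable σ) {N : ℕ} (hN : ∀ x, σ x < N) (r : ℕ) :
    ∃ k : ℕ → ℕ, ∑ j ∈ range N, k j = r ∧ ∀ j, μ (σ ⁻¹' {j}) ≤ (k j + 1) / r := by
  set p : ℕ → ℝ≥0 := fun j => (μ (σ ⁻¹' {j})).toNNReal
  have hp_coe (j : ℕ) : (p j : ℝ≥0∞) = μ (σ ⁻¹' {j}) := ENNReal.coe_toNNReal (by finiteness)
  have hp : ∑ j ∈ range N, p j = 1 := by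
    have hpre : σ ⁻¹' ↑(range N) = Set.univ := by ext x; simp [hN x]
    rw [← ENNReal.coe_inj, ENNReal.ofNNReal_finsetSum]
    simp only [hp_coe, ENNReal.coe_one]
    rw [sum_measure_preimage_singleton _ fun j _ => hσ (measurableSet_singleton j), hpre,
      measure_univ]
  obtain ⟨k, hk, hpk⟩ := exists_sum_range_eq_and_mul_lt_add_one hp r
  refine ⟨k, hk, fun j => ?_⟩
  rw [← hp_coe, ENNReal.le_div_iff_mul_le (Or.inr (by simp)) (Or.inr (by simp)), mul_comm]
  exact_mod_cast (hpk j).le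

section LevyProkhorov

variable {X : Type*} [PseudoMetricSpace X] [MeasurableSpace X] [OpensMeasurableSpace X]

lemma levyProkhorovDist_map_le (μ : Measure X) [IsProbabilityMeasure μ] {T : X → X}
    (hT : Measurable T) {δ : ℝ} (hδ : 0 ≤ δ) (h : ∀ x, dist (T x) x ≤ δ) :
    levyProkhorovDist μ (μ.map T) ≤ δ := by
  have := Measure.isProbabilityMeasure_map (μ := μ) hT.aemeasurable
  refine levyProkhorovDist_le_of_forall_le _ _ hδ fun ε B hε _ => ?_
  have hB : B ⊆ T ⁻¹' thickening ε B := fun x hx =>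
    mem_thickening_iff.2 ⟨x, hx, (h x).trans_lt hε⟩
  rw [Measure.map_apply hT isOpen_thickening.measurableSet]
  exact (measure_mono hB).trans le_self_add

lemma exists_levyProkhorovDist_map_empiricalMeasure_le (μ : Measure X) [IsProbabilityMeasure μ]
    {σ : X → ℕ} (hσ : Measurable σ) {N : ℕ} (hN : ∀ x, σ x < N) (c : ℕ → X)
    (ι : Type*) [Fintype ι] [Nonempty ι] :
    ∃ z : ι → X, levyProkhorovDist (μ.map (c ∘ σ)) (empiricalMeasure z) ≤ N / Fintype.card ι := by
  set r := Fintype.card ι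
  obtain ⟨k, hk, hμk⟩ := exists_sum_range_eq_and_measure_preimage_le μ hσ hN r
  obtain ⟨z, hz⟩ := exists_empiricalMeasure_eq_sum_nsmul_dirac (ι := ι) c hk
  have := Measure.isProbabilityMeasure_map (μ := μ)
    (measurable_from_nat (f := c) |>.comp hσ).aemeasurable
  refine ⟨z, levyProkhorovDist_le_of_forall_le _ _ (by positivity) fun ε B hε hB => ?_⟩
  calc (μ.map (c ∘ σ)) B = ∑ j ∈ range N, μ (σ ⁻¹' {j}) * B.indicator 1 (c j) := by
        simp [map_comp_eq_sum_smul_dirac μ hσ hN c, Measure.finsetSum_apply,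
          Measure.dirac_apply' _ hB]
    _ ≤ ∑ j ∈ range N, (k j + 1) / (r : ℝ≥0∞) * B.indicator 1 (c j) := by
        gcongr with j; exact hμk j
    _ = (r : ℝ≥0∞)⁻¹ * ∑ j ∈ range N, (k j : ℝ≥0∞) * B.indicator 1 (c j)
          + (r : ℝ≥0∞)⁻¹ * ∑ j ∈ range N, B.indicator 1 (c j) := by
        rw [mul_sum, mul_sum, ← sum_add_distrib]
        exact sum_congr rfl fun j _ => by rw [ENNReal.div_eq_inv_mul]; ring
    _ ≤ empiricalMeasure z B + (r : ℝ≥0∞)⁻¹ * N := by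
        gcongr
        · simp [hz, Measure.finsetSum_apply, Measure.dirac_apply' _ hB, r]
        · calc ∑ j ∈ range N, B.indicator 1 (c j) ≤ ∑ _j ∈ range N, (1 : ℝ≥0∞) :=
                sum_le_sum fun j _ => Set.indicator_apply_le' (fun _ => le_rfl) fun _ => zero_le_one
            _ = N := by simp
    _ ≤ empiricalMeasure z (thickening ε B) + ENNReal.ofReal ε := by
        have hr' : (0 : ℝ) < r := by simp [r, Fintype.card_pos]
        gcongr
        · exact self_subset_thickening ((div_nonneg N.cast_nonneg hr'.le).trans_lt hε) B
        · rw [← ENNReal.ofReal_natCast, ← ENNReal.ofReal_natCast N,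
            ← ENNReal.ofReal_inv_of_pos hr', ← ENNReal.ofReal_mul (inv_nonneg.2 hr'.le),
            inv_mul_eq_div]
          exact ENNReal.ofReal_le_ofReal hε.le

lemma ProbabilityMeasure.exists_levyProkhorovDist_lt_subset [SeparableSpace X]
    {S : Set (ProbabilityMeasure X)} (hS : IsOpen S) {μ : ProbabilityMeasure X} (hμ : μ ∈ S) :
    ∃ ε > 0, ∀ ν : ProbabilityMeasure X, levyProkhorovDist (ν : Measure X) μ < ε → ν ∈ S := by
  let H := LevyProkhorov.probabilityMeasureHomeomorph (Ω := X)
  obtain ⟨ε, hε, hball⟩ := Metric.isOpen_iff.1 (H.symm.isOpen_preimage.2 hS) (H μ) hμ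
  exact ⟨ε, hε, fun ν hν => hball (show dist (H ν) (H μ) < ε from hν)⟩

end LevyProkhorov

lemma DenseRange.exists_forall_exists_le_dist_lt {X : Type*} [PseudoMetricSpace X] [CompactSpace X]
    {e : ℕ → X} (he : DenseRange e) {δ : ℝ} (hδ : 0 < δ) :
    ∃ N, ∀ x, ∃ k ≤ N, dist (e k) x < δ := by
  obtain ⟨t, ht⟩ := isCompact_univ.elim_finite_subcover (fun k => ball (e k) δ)
    (fun _ => isOpen_ball) fun x _ => by
      obtain ⟨k, hk⟩ := he.exists_dist_lt x hδ
      exact Set.mem_iUnion.2 ⟨k, mem_ball.2 hk⟩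
  refine ⟨t.sup id, fun x => ?_⟩
  obtain ⟨k, hk, hx⟩ := Set.mem_iUnion₂.1 (ht (Set.mem_univ x))
  exact ⟨k, le_sup (f := id) hk, mem_ball'.1 hx⟩

universe u

theorem exists_empiricalProba_mem {X : Type*} [PseudoMetricSpace X] [CompactSpace X]
    [MeasurableSpace X] [OpensMeasurableSpace X] {S : Set (ProbabilityMeasure X)}
    (hS : IsOpen S) (hne : S.Nonempty) :
    ∃ n : ℕ, ∀ (ι : Type u) [Fintype ι] [Nonempty ι], n ≤ Fintype.card ι →
      ∃ z : ι → X, empiricalProba z ∈ S := by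
  obtain ⟨μ, hμ⟩ := hne
  obtain ⟨ε, hε, hball⟩ := ProbabilityMeasure.exists_levyProkhorovDist_lt_subset hS hμ
  have := nonempty_of_isProbabilityMeasure (μ : Measure X)
  set δ := ε / 3
  have hδ : 0 < δ := by positivity
  set e := denseSeq X
  obtain ⟨N, hN⟩ := (denseRange_denseSeq X).exists_forall_exists_le_dist_lt hδ
  set σ := SimpleFunc.nearestPtInd e N
  have hT : ∀ x, dist (e (σ x)) x ≤ δ := fun x => by
    obtain ⟨k, hk, hx⟩ := hN x
    have := SimpleFunc.edist_nearestPt_le e x hk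
    rw [edist_dist, edist_dist, ENNReal.ofReal_le_ofReal_iff dist_nonneg] at this
    exact this.trans hx.le
  refine ⟨⌈(N + 1) / δ⌉₊, fun ι _ _ hι => ?_⟩
  obtain ⟨z, hz⟩ := exists_levyProkhorovDist_map_empiricalMeasure_le (μ : Measure X)
    σ.measurable (N := N + 1) (fun x => Nat.lt_succ_of_le (SimpleFunc.nearestPtInd_le e N x)) e ι
  have hcard : ((N + 1 : ℕ) : ℝ) / Fintype.card ι ≤ δ := by
    have hpos : (0 : ℝ) < Fintype.card ι := by simp [Fintype.card_pos]
    rw [div_le_iff₀ hpos, mul_comm, ← div_le_iff₀ hδ]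
    exact (Nat.le_ceil _).trans (by exact_mod_cast hι)
  have hmap := levyProkhorovDist_map_le (μ : Measure X)
    (measurable_from_nat.comp σ.measurable) hδ.le hT
  refine ⟨z, hball _ ?_⟩
  calc levyProkhorovDist (empiricalMeasure z) μ
      ≤ levyProkhorovDist (empiricalMeasure z) ((μ : Measure X).map (e ∘ σ))
        + levyProkhorovDist ((μ : Measure X).map (e ∘ σ)) μ := levyProkhorovDist_triangle _ _ _
    _ ≤ δ + δ := by
        rw [levyProkhorovDist_comm, levyProkhorovDist_comm _ (μ : Measure X)]
        exact add_le_add (hz.trans hcard) hmap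
    _ < ε := by linarith [show δ = ε / 3 from rfl]

lemma continuous_iterN {X : Type*} [TopologicalSpace X] {f : ℕ → X → X}
    (hf : ∀ n, Continuous (f n)) (n : ℕ) : Continuous (iterN f n) := by
  induction n with
  | zero => exact continuous_id
  | succ n ih => exact (hf n).comp ih

lemma NAWeaklyMixingOrder.exists_of_equiv {X : Type*} [TopologicalSpace X] {f : ℕ → X → X}
    {m : ℕ} (h : NAWeaklyMixingOrder f m) {ι : Type*} (e : ι ≃ Fin m) {U V : ι → Set X}
    (hU : ∀ i, IsOpen (U i)) (hV : ∀ i, IsOpen (V i)) (hUne : ∀ i, (U i).Nonempty)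
    (hVne : ∀ i, (V i).Nonempty) :
    ∃ n, 0 < n ∧ ∀ i, (iterN f n '' U i ∩ V i).Nonempty := by
  obtain ⟨n, hn, hmix⟩ := h (U ∘ e.symm) (V ∘ e.symm) (fun i => hU _) (fun i => hV _)
    (fun i => hUne _) (fun i => hVne _)
  exact ⟨n, hn, fun i => by simpa using hmix (e i)⟩

lemma ProbabilityMeasure.isOpen_setOf_lt_apply {X : Type*} [TopologicalSpace X]
    [MeasurableSpace X] [OpensMeasurableSpace X] [HasOuterApproxClosed X] {G : Set X}
    (hG : IsOpen G) (a : ℝ≥0∞) : IsOpen {μ : ProbabilityMeasure X | a < (μ : Measure X) G} :=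
  (lowerSemicontinuous_iff_le_liminf.2 fun _ =>
    ProbabilityMeasure.le_liminf_measure_open_of_tendsto tendsto_id hG).isOpen_preimage a

section Induced

variable {X : Type*} [TopologicalSpace X] [MeasurableSpace X] [BorelSpace X]
  {f : ℕ → X → X} (hf : ∀ n, Continuous (f n))
include hf

lemma coe_iterN_inducedM (n : ℕ) (μ : ProbabilityMeasure X) :
    ((iterN (inducedM f hf) n μ : ProbabilityMeasure X) : Measure X) =
      (μ : Measure X).map (iterN f n) := by
  induction n with
  | zero => exact Measure.map_id.symm
  | succ n ih =>
    change ((inducedM f hf n (iterN (inducedM f hf) n μ) : Measure X)) = _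
    rw [inducedM, ProbabilityMeasure.toMeasure_map, ih,
      Measure.map_map (hf n).measurable (continuous_iterN hf n).measurable]
    rfl

lemma iterN_inducedM_empiricalProba {ι : Type*} [Fintype ι] [Nonempty ι] (n : ℕ) (z : ι → X) :
    iterN (inducedM f hf) n (empiricalProba z) = empiricalProba (iterN f n ∘ z) :=
  Subtype.ext <| (coe_iterN_inducedM hf n _).trans <|
    map_empiricalMeasure (continuous_iterN hf n).measurable z

theorem NAWeaklyMixingOrder.of_inducedM [HasOuterApproxClosed X] {m : ℕ}
    (h : NAWeaklyMixingOrder (inducedM f hf) m) : NAWeaklyMixingOrder f m := by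
  intro U V hU hV hUne hVne
  let heavy (G : Set X) : Set (ProbabilityMeasure X) := {μ | 2⁻¹ < (μ : Measure X) G}
  have hdirac {G : Set X} {x : X} (hx : x ∈ G) : diracProba x ∈ heavy G := by
    simp [heavy, diracProba_toMeasure_apply_of_mem hx]
  obtain ⟨n, hn, hmix⟩ := h (heavy ∘ U) (heavy ∘ V)
    (fun i => ProbabilityMeasure.isOpen_setOf_lt_apply (hU i) _)
    (fun i => ProbabilityMeasure.isOpen_setOf_lt_apply (hV i) _)
    (fun i => (hUne i).elim fun _ hx => ⟨_, hdirac hx⟩)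
    (fun i => (hVne i).elim fun _ hx => ⟨_, hdirac hx⟩)
  refine ⟨n, hn, fun i => ?_⟩
  obtain ⟨_, ⟨μ, hμU, rfl⟩, hμV⟩ := hmix i
  have hTV := (hV i).measurableSet.preimage (continuous_iterN hf n).measurable
  simp only [Function.comp, heavy, Set.mem_ofPred_eq, coe_iterN_inducedM hf n μ,
    Measure.map_apply (continuous_iterN hf n).measurable (hV i).measurableSet] at hμU hμV
  have hmass : (μ : Measure X) Set.univ <
      (μ : Measure X) (U i) + (μ : Measure X) (iterN f n ⁻¹' V i) := by
    rw [measure_univ, ← ENNReal.inv_two_add_inv_two]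
    exact ENNReal.add_lt_add hμU hμV
  obtain ⟨x, hxU, hxV⟩ := nonempty_inter_of_measure_lt_add (μ : Measure X) hTV
    (Set.subset_univ _) (Set.subset_univ _) hmass
  exact ⟨_, Set.mem_image_of_mem _ hxU, hxV⟩

end Induced

section Forward

variable {X : Type*} [PseudoMetricSpace X] [CompactSpace X] [MeasurableSpace X] [BorelSpace X]
  {f : ℕ → X → X} (hf : ∀ n, Continuous (f n))
include hf

theorem NAWeaklyMixingOrder.inducedM_of_forall_mul {m : ℕ}
    (h : ∀ r, NAWeaklyMixingOrder f (m * (r + 1))) : NAWeaklyMixingOrder (inducedM f hf) m := by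
  intro U V hU hV hUne hVne
  choose a ha using fun i => exists_empiricalProba_mem (hU i) (hUne i)
  choose b hb using fun i => exists_empiricalProba_mem (hV i) (hVne i)
  set r := ∑ i, (a i + b i)
  have hab : ∀ i, a i + b i ≤ r := fun i =>
    single_le_sum (f := fun i => a i + b i) (fun _ _ => Nat.zero_le _) (mem_univ i)
  choose z hz using fun i => ha i (Fin (r + 1)) (by simp; have := hab i; omega)
  choose w hw using fun i => hb i (Fin (r + 1)) (by simp; have := hab i; omega)
  have hbox {S : Set (ProbabilityMeasure X)} (hS : IsOpen S) {y : Fin (r + 1) → X}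
      (hy : empiricalProba y ∈ S) : ∃ W : Fin (r + 1) → Set X,
        (∀ j, IsOpen (W j) ∧ y j ∈ W j) ∧ Set.univ.pi W ⊆ empiricalProba ⁻¹' S :=
    isOpen_pi_iff'.1 (hS.preimage continuous_empiricalProba) y hy
  choose W hW hWU using fun i => hbox (hU i) (hz i)
  choose W' hW' hWV using fun i => hbox (hV i) (hw i)
  obtain ⟨n, hn, hmix⟩ := (h r).exists_of_equiv finProdFinEquiv
    (U := fun p => W p.1 p.2) (V := fun p => W' p.1 p.2)
    (fun p => (hW _ _).1) (fun p => (hW' _ _).1) (fun p => ⟨_, (hW _ _).2⟩)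
    (fun p => ⟨_, (hW' _ _).2⟩)
  have hpts (p : Fin m × Fin (r + 1)) : ∃ x ∈ W p.1 p.2, iterN f n x ∈ W' p.1 p.2 := by
    obtain ⟨_, ⟨x, hx, rfl⟩, hx'⟩ := hmix p
    exact ⟨x, hx, hx'⟩
  choose x hxW hxW' using hpts
  refine ⟨n, hn, fun i => ⟨_, ⟨empiricalProba fun j => x (i, j),
    hWU i fun j _ => hxW (i, j), rfl⟩, ?_⟩⟩
  rw [iterN_inducedM_empiricalProba hf]
  exact hWV i fun j _ => hxW' (i, j)

end Forward

/-- the base system is weakly mixing of all orders iff the induced system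
on probability measures is weakly mixing of all orders. -/
theorem weaklyMixing_all_orders_iff_measures {X : Type*} [MetricSpace X] [CompactSpace X]
    [MeasurableSpace X] [BorelSpace X] (f : ℕ → X → X) (hf : ∀ n, Continuous (f n)) :
    (∀ m : ℕ, 2 ≤ m → NAWeaklyMixingOrder f m) ↔
      (∀ m : ℕ, 2 ≤ m → NAWeaklyMixingOrder (inducedM f hf) m) :=
  ⟨fun h m hm => NAWeaklyMixingOrder.inducedM_of_forall_mul hf fun r =>
      h _ (hm.trans (Nat.le_mul_of_pos_right m r.succ_pos)),
    fun h m hm => (h m hm).of_inducedM hf⟩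
end

section
/- An m-periodic commutative non-autonomous system (X, f_{1,∞}) that is weakly mixing is totally transitive, i.e., the k-th iterate system f_{1,∞}^{[k]} is topologically transitive for every k ≥ 1. -/
open Set Filter MeasureTheory TopologicalSpace

private lemma iterN_cont {X : Type*} [TopologicalSpace X] (f : ℕ → X → X)
    (hf : ∀ n, Continuous (f n)) : ∀ n, Continuous (iterN f n)
  | 0 => continuous_id
  | n + 1 => (hf n).comp (iterN_cont f hf n)

private lemma blockC_cont {X : Type*} [TopologicalSpace X] (f : ℕ → X → X)
    (hf : ∀ n, Continuous (f n)) (s k : ℕ) : Continuous (blockC f s k) :=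
  iterN_cont (fun i => f (s + i)) (fun i => hf (s + i)) k

private lemma iterN_add {X : Type*} (f : ℕ → X → X) (a : ℕ) :
    ∀ (b : ℕ) (x : X), iterN f (a + b) x = blockC f a b (iterN f a x)
  | 0, _ => rfl
  | b+1, x => by
    show f (a+b) (iterN f (a+b) x) = f (a+b) (blockC f a b (iterN f a x))
    rw [iterN_add f a b x]

private lemma f_per_aux {X : Type*} (f : ℕ → X → X) (m : ℕ) (hper : ∀ n, f (n + m) = f n) :
    ∀ (q r : ℕ), f (r + q * m) = f r
  | 0, r => by simp
  | q+1, r => by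
    rw [Nat.succ_mul, ← Nat.add_assoc, hper, f_per_aux f m hper q r]

private lemma f_mod {X : Type*} (f : ℕ → X → X) (m : ℕ) (hm : 0 < m)
    (hper : ∀ n, f (n + m) = f n) (n : ℕ) : f n = f (n % m) := by
  conv_lhs => rw [← Nat.mod_add_div' n m]
  exact f_per_aux f m hper (n / m) (n % m)

private lemma blockC_mod {X : Type*} (f : ℕ → X → X) (m : ℕ) (hm : 0 < m)
    (hper : ∀ n, f (n + m) = f n) (a b : ℕ) : blockC f a b = blockC f (a % m) b := by
  unfold blockC
  have he : (fun i => f (a + i)) = (fun i => f (a % m + i)) := by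
    funext i
    rw [f_mod f m hm hper (a + i), f_mod f m hm hper (a % m + i)]
    rw [Nat.add_mod a i m, Nat.add_mod (a % m) i m, Nat.mod_mod_of_dvd a (dvd_refl m)]
  rw [he]

private lemma comm_f_iterN {X : Type*} (f : ℕ → X → X)
    (hc : ∀ i j, f i ∘ f j = f j ∘ f i) :
    ∀ (j b : ℕ) (x : X), f j (iterN f b x) = iterN f b (f j x)
  | _, 0, _ => rfl
  | j, b+1, x => by
    show f j (f b (iterN f b x)) = f b (iterN f b (f j x))
    rw [← comm_f_iterN f hc j b x]
    exact congrFun (hc j b) (iterN f b x)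

private lemma comm_iterN {X : Type*} (f : ℕ → X → X)
    (hc : ∀ i j, f i ∘ f j = f j ∘ f i) :
    ∀ (a b : ℕ) (x : X), iterN f a (iterN f b x) = iterN f b (iterN f a x)
  | 0, _, _ => rfl
  | a+1, b, x => by
    show f a (iterN f a (iterN f b x)) = iterN f b (f a (iterN f a x))
    rw [comm_iterN f hc a b x, comm_f_iterN f hc a b (iterN f a x)]

private lemma iterN_factor {X : Type*} (f : ℕ → X → X)
    (hc : ∀ i j, f i ∘ f j = f j ∘ f i) :
    ∀ (n i : ℕ), i < n → ∀ x : X, ∃ y, iterN f n x = f i y := by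
  intro n
  induction n with
  | zero => intro i hi; omega
  | succ n IH =>
    intro i hi x
    rcases Nat.lt_succ_iff_lt_or_eq.mp hi with hlt | heq
    · obtain ⟨y, hy⟩ := IH i hlt x
      refine ⟨f n y, ?_⟩
      show f n (iterN f n x) = f i (f n y)
      rw [hy]
      exact congrFun (hc n i) y
    · subst heq; exact ⟨iterN f i x, rfl⟩


private lemma wm_trans {X : Type*} [TopologicalSpace X] {f : ℕ → X → X}
    (h : NAWeaklyMixing f) (U V : Set X) (hU : IsOpen U) (hV : IsOpen V)
    (hUn : U.Nonempty) (hVn : V.Nonempty) :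
    ∃ n : ℕ, 0 < n ∧ (iterN f n '' U ∩ V).Nonempty := by
  obtain ⟨n, hn, h1, _⟩ := h U U V V hU hU hV hV hUn hUn hVn hVn
  exact ⟨n, hn, h1⟩

private lemma common_times {X : Type*} [TopologicalSpace X] (f : ℕ → X → X)
    (hf : ∀ n, Continuous (f n)) (hc : ∀ i j, f i ∘ f j = f j ∘ f i)
    (h : NAWeaklyMixing f) :
    ∀ (N : ℕ) (Us Vs : ℕ → Set X),
      (∀ t, t < N → IsOpen (Us t)) → (∀ t, t < N → IsOpen (Vs t)) →
      (∀ t, t < N → (Us t).Nonempty) → (∀ t, t < N → (Vs t).Nonempty) →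
      ∃ n : ℕ, 0 < n ∧ ∀ t, t < N → (iterN f n '' Us t ∩ Vs t).Nonempty := by
  intro N
  induction N with
  | zero => exact fun _ _ _ _ _ _ => ⟨1, one_pos, fun t ht => absurd ht (by omega)⟩
  | succ N IH =>
    cases N with
    | zero =>
      intro Us Vs hUo hVo hUn hVn
      obtain ⟨n, hn, hhit⟩ := wm_trans h (Us 0) (Vs 0) (hUo 0 one_pos) (hVo 0 one_pos)
        (hUn 0 one_pos) (hVn 0 one_pos)
      refine ⟨n, hn, fun t ht => ?_⟩
      interval_cases t
      exact hhit
    | succ M =>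
      intro Us Vs hUo hVo hUn hVn
      obtain ⟨a, _, hA, hB⟩ := h (Us M) (Vs M) (Us (M+1)) (Vs (M+1))
        (hUo M (by omega)) (hVo M (by omega)) (hUo (M+1) (by omega)) (hVo (M+1) (by omega))
        (hUn M (by omega)) (hVn M (by omega)) (hUn (M+1) (by omega)) (hVn (M+1) (by omega))
      set U' := Us M ∩ (iterN f a) ⁻¹' (Us (M+1)) with hU'
      set V' := Vs M ∩ (iterN f a) ⁻¹' (Vs (M+1)) with hV'
      have hU'o : IsOpen U' :=
        (hUo M (by omega)).inter ((hUo (M+1) (by omega)).preimage (iterN_cont f hf a))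
      have hV'o : IsOpen V' :=
        (hVo M (by omega)).inter ((hVo (M+1) (by omega)).preimage (iterN_cont f hf a))
      have hU'n : U'.Nonempty := by
        obtain ⟨y, ⟨x, hxU, rfl⟩, hy⟩ := hA
        exact ⟨x, hxU, hy⟩
      have hV'n : V'.Nonempty := by
        obtain ⟨y, ⟨x, hxU, rfl⟩, hy⟩ := hB
        exact ⟨x, hxU, hy⟩
      obtain ⟨n, hn, hhit⟩ := IH (fun t => if t = M then U' else Us t)
        (fun t => if t = M then V' else Vs t)
        (fun t ht => by by_cases hT : t = M <;> simp [hT] <;>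
          [exact hU'o; exact hUo t (by omega)])
        (fun t ht => by by_cases hT : t = M <;> simp [hT] <;>
          [exact hV'o; exact hVo t (by omega)])
        (fun t ht => by by_cases hT : t = M <;> simp [hT] <;>
          [exact hU'n; exact hUn t (by omega)])
        (fun t ht => by by_cases hT : t = M <;> simp [hT] <;>
          [exact hV'n; exact hVn t (by omega)])
      refine ⟨n, hn, fun t ht => ?_⟩
      rcases (by omega : t < M ∨ t = M ∨ t = M + 1) with h1 | h1 | h1
      · have := hhit t (by omega)
        simpa [if_neg (by omega : ¬ t = M)] using this
      · subst h1
        obtain ⟨y, ⟨x, hxU, rfl⟩, hy⟩ := hhit t (by omega)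
        simp only [if_pos rfl] at hxU hy
        exact ⟨iterN f n x, ⟨x, hxU.1, rfl⟩, hy.1⟩
      · subst h1
        obtain ⟨y, ⟨x, hxU, rfl⟩, hy⟩ := hhit M (by omega)
        simp only [if_pos rfl] at hxU hy
        refine ⟨iterN f n (iterN f a x), ⟨iterN f a x, hxU.2, rfl⟩, ?_⟩
        rw [comm_iterN f hc n a x]
        exact hy.2

private lemma open_infinite {X : Type*} [MetricSpace X] {f : ℕ → X → X}
    (h : NAWeaklyMixing f) (hnt : ∃ x y : X, x ≠ y) :
    ∀ W : Set X, IsOpen W → W.Nonempty → W.Infinite := by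
  intro W hW hWn
  by_contra hfin
  rw [Set.not_infinite] at hfin
  obtain ⟨w, hw⟩ := hWn
  have hwopen : IsOpen ({w} : Set X) := by
    have h1 : IsClosed (W \ {w}) := (hfin.subset Set.diff_subset).isClosed
    have h2 : ({w} : Set X) = W ∩ (W \ {w})ᶜ := by
      ext z
      simp only [Set.mem_singleton_iff, Set.mem_inter_iff, Set.mem_compl_iff, Set.mem_diff,
        Set.mem_singleton_iff, not_and, not_not]
      constructor
      · rintro rfl; exact ⟨hw, fun _ => rfl⟩
      · rintro ⟨hzW, hz⟩; exact hz hzW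
    rw [h2]
    exact hW.inter h1.isOpen_compl
  have hne : ({w}ᶜ : Set X).Nonempty := by
    obtain ⟨x, y, hxy⟩ := hnt
    rcases eq_or_ne x w with rfl | hxw
    · exact ⟨y, fun hy => hxy (by simpa using hy.symm)⟩
    · exact ⟨x, by simpa using hxw⟩
  obtain ⟨n, _, hA, hB⟩ := h {w} {w} {w} {w}ᶜ hwopen hwopen hwopen
    isClosed_singleton.isOpen_compl ⟨w, rfl⟩ ⟨w, rfl⟩ ⟨w, rfl⟩ hne
  obtain ⟨y, ⟨x, hx, rfl⟩, hy⟩ := hA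
  obtain ⟨y', ⟨x', hx', rfl⟩, hy'⟩ := hB
  rw [Set.mem_singleton_iff] at hx hx' hy
  subst hx; subst hx'
  exact hy' (by rw [hy]; rfl)

private lemma unbounded_hit {X : Type*} [MetricSpace X] {f : ℕ → X → X}
    (hf : ∀ n, Continuous (f n)) (h : NAWeaklyMixing f)
    (hinf : ∀ W : Set X, IsOpen W → W.Nonempty → W.Infinite)
    (V : Set X) (hV : IsOpen V) (hVn : V.Nonempty) (L : ℕ) (hL : 0 < L) :
    ∃ n : ℕ, L < n ∧ ((iterN f n '' Set.univ) ∩ V).Nonempty := by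
  by_contra hcon
  push_neg at hcon
  have hbd : ∀ (n : ℕ), L < n → ∀ x : X, iterN f n x ∉ V := by
    intro n hn x hx
    exact Set.eq_empty_iff_forall_notMem.mp (hcon n hn) (iterN f n x) ⟨⟨x, trivial, rfl⟩, hx⟩
  -- choose L+1 distinct points of V
  obtain ⟨T, hTV, hTcard⟩ := (hinf V hV hVn).exists_subset_card_eq (L + 1)
  set e := (Finset.equivFinOfCardEq hTcard).symm with he
  set p : Fin (L + 1) → X := fun i => ((e i : T) : X) with hp
  have hpmem : ∀ i, p i ∈ V := fun i => hTV (e i).2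
  have hpinj : Function.Injective p := by
    intro i j hij
    simp only [hp] at hij
    exact e.injective (Subtype.ext hij)
  -- minimal distance
  set S : Finset (Fin (L+1) × Fin (L+1)) := Finset.univ.filter (fun q => q.1 ≠ q.2) with hS
  have hSne : S.Nonempty := by
    refine ⟨(⟨0, by omega⟩, ⟨1, by omega⟩), ?_⟩
    simp [hS, Fin.ext_iff]
  set D : ℝ := S.inf' hSne (fun q => dist (p q.1) (p q.2)) with hD
  have hDpos : 0 < D := by
    rw [hD, Finset.lt_inf'_iff]
    intro q hq
    rw [hS, Finset.mem_filter] at hq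
    exact dist_pos.mpr (fun he => hq.2 (hpinj he))
  set B : Fin (L+1) → Set X := fun t => Metric.ball (p t) (D/3) ∩ V with hB
  have hBo : ∀ t, IsOpen (B t) := fun t => Metric.isOpen_ball.inter hV
  have hBn : ∀ t, p t ∈ B t := fun t =>
    ⟨Metric.mem_ball_self (by linarith), hpmem t⟩
  have hBsub : ∀ t, B t ⊆ V := fun t => Set.inter_subset_right
  have hBcl : ∀ t, closure (B t) ⊆ Metric.closedBall (p t) (D/3) := fun t =>
    (closure_mono Set.inter_subset_left).trans Metric.closure_ball_subset_closedBall
  set x₀ : X := p 0 with hx₀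
  have key : ∀ t : Fin (L+1), ∃ n, 0 < n ∧ n ≤ L ∧ iterN f n x₀ ∈ closure (B t) := by
    intro t
    by_contra hno
    push_neg at hno
    have hd : ∀ n : ℕ, ∃ δ : ℝ, 0 < δ ∧
        ∀ y, dist y x₀ < δ → 0 < n → n ≤ L → iterN f n y ∉ closure (B t) := by
      intro n
      by_cases hnr : 0 < n ∧ n ≤ L
      · have hnot := hno n hnr.1 hnr.2
        have hmem : (closure (B t))ᶜ ∈ nhds (iterN f n x₀) :=
          isClosed_closure.isOpen_compl.mem_nhds hnot
        have hpre : (iterN f n) ⁻¹' (closure (B t))ᶜ ∈ nhds x₀ :=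
          (iterN_cont f hf n).continuousAt.preimage_mem_nhds hmem
        obtain ⟨ε, hε, hball⟩ := Metric.mem_nhds_iff.mp hpre
        exact ⟨ε, hε, fun y hy _ _ => hball (Metric.mem_ball.mpr hy)⟩
      · exact ⟨1, one_pos, fun y _ h1 h2 => absurd ⟨h1, h2⟩ hnr⟩
    choose δ hδ0 hδp using hd
    set ε : ℝ := (Finset.Icc 1 L).inf' (Finset.nonempty_Icc.mpr hL) δ with hε
    have hε0 : 0 < ε := by
      rw [hε, Finset.lt_inf'_iff]
      exact fun n _ => hδ0 n
    obtain ⟨n, hn0, ⟨y, ⟨z, hz, rfl⟩, hzB⟩⟩ := wm_trans h (Metric.ball x₀ ε) (B t)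
      Metric.isOpen_ball (hBo t) ⟨x₀, Metric.mem_ball_self hε0⟩ ⟨p t, hBn t⟩
    have hnL : n ≤ L := by
      by_contra hgt
      exact hbd n (by omega) z (hBsub t hzB)
    have hdist : dist z x₀ < δ n := by
      have h1 : dist z x₀ < ε := Metric.mem_ball.mp hz
      have h2 : ε ≤ δ n := Finset.inf'_le δ (Finset.mem_Icc.mpr ⟨hn0, hnL⟩)
      linarith
    exact hδp n z hdist hn0 hnL (subset_closure hzB)
  choose nn hn1 hn2 hn3 using key
  obtain ⟨s, t, hst, hGeq⟩ := Fintype.exists_ne_map_eq_of_card_lt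
    (fun t : Fin (L+1) => (⟨nn t - 1, by have := hn1 t; have := hn2 t; omega⟩ : Fin L))
    (by simp)
  have hv : nn s - 1 = nn t - 1 := congrArg Fin.val hGeq
  have hnst : nn s = nn t := by have := hn1 s; have := hn1 t; omega
  have hzs : iterN f (nn s) x₀ ∈ Metric.closedBall (p s) (D/3) := hBcl s (hn3 s)
  have hzt : iterN f (nn s) x₀ ∈ Metric.closedBall (p t) (D/3) := by
    rw [hnst]; exact hBcl t (hn3 t)
  have hmemS : (s, t) ∈ S := by
    rw [hS]
    exact Finset.mem_filter.mpr ⟨Finset.mem_univ _, hst⟩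
  have hDle : D ≤ dist (p s) (p t) := by
    rw [hD]
    exact Finset.inf'_le _ hmemS
  have h1 : dist (iterN f (nn s) x₀) (p s) ≤ D/3 := Metric.mem_closedBall.mp hzs
  have h2 : dist (iterN f (nn s) x₀) (p t) ≤ D/3 := Metric.mem_closedBall.mp hzt
  have h3 : dist (p s) (p t) ≤ dist (iterN f (nn s) x₀) (p s) + dist (iterN f (nn s) x₀) (p t) := by
    rw [dist_comm (iterN f (nn s) x₀) (p s)]
    exact dist_triangle _ _ _
  linarith

private lemma f_all_surj {X : Type*} [MetricSpace X] [CompactSpace X] {f : ℕ → X → X}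
    (hf : ∀ n, Continuous (f n)) (m : ℕ) (hm : 0 < m)
    (hper : ∀ n, f (n + m) = f n) (hc : ∀ i j, f i ∘ f j = f j ∘ f i)
    (h : NAWeaklyMixing f)
    (hinf : ∀ W : Set X, IsOpen W → W.Nonempty → W.Infinite) :
    ∀ i, Function.Surjective (f i) := by
  have hkey : ∀ i', i' < m → Function.Surjective (f i') := by
    intro i' hi'
    have hdense : ∀ V : Set X, IsOpen V → V.Nonempty → (V ∩ Set.range (f i')).Nonempty := by
      intro V hV hVn
      obtain ⟨n, hn, ⟨z, ⟨x, _, rfl⟩, hzV⟩⟩ := unbounded_hit hf h hinf V hV hVn m hm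
      obtain ⟨y, hy⟩ := iterN_factor f hc n i' (by omega) x
      exact ⟨iterN f n x, hzV, y, hy.symm⟩
    have hcl : IsClosed (Set.range (f i')) := (isCompact_range (hf i')).isClosed
    intro z
    by_contra hz
    have hne : ((Set.range (f i'))ᶜ : Set X).Nonempty := ⟨z, fun hmem => hz (by
      obtain ⟨y, hy⟩ := hmem; exact ⟨y, hy⟩)⟩
    obtain ⟨w, hw1, hw2⟩ := hdense _ hcl.isOpen_compl hne
    exact hw1 hw2
  intro i
  rw [f_mod f m hm hper i]
  exact hkey _ (Nat.mod_lt _ hm)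

private lemma blockC_surj {X : Type*} (f : ℕ → X → X)
    (hsurj : ∀ n, Function.Surjective (f n)) :
    ∀ (s j : ℕ), Function.Surjective (blockC f s j)
  | _, 0 => fun x => ⟨x, rfl⟩
  | s, j+1 => by
    have hdec : blockC f s (j+1) = f (s + j) ∘ blockC f s j := rfl
    rw [hdec]
    exact (hsurj (s + j)).comp (blockC_surj f hsurj s j)

private lemma iterN_kthSys {X : Type*} (f : ℕ → X → X) (k : ℕ) :
    ∀ (n : ℕ) (x : X), iterN (kthSys f k) n x = iterN f (n * k) x
  | 0, x => by simp [iterN, Nat.zero_mul]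
  | n+1, x => by
    show kthSys f k n (iterN (kthSys f k) n x) = iterN f ((n+1) * k) x
    rw [iterN_kthSys f k n x]
    show blockC f (n * k) k (iterN f (n * k) x) = iterN f ((n+1) * k) x
    rw [← iterN_add f (n * k) k x, Nat.succ_mul]

/-- an `m`-periodic commutative weakly mixing non-autonomous system is
totally transitive. -/
theorem periodic_commutative_weaklyMixing_totally_transitive {X : Type*} [MetricSpace X]
    [CompactSpace X] (f : ℕ → X → X) (hf : ∀ n, Continuous (f n)) (m : ℕ) (hm : 0 < m)
    (hper : ∀ n, f (n + m) = f n) (hc : ∀ i j, f i ∘ f j = f j ∘ f i)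
    (h : NAWeaklyMixing f) :
    ∀ k : ℕ, 1 ≤ k → NATransitive (kthSys f k) := by
  intro k hk U V hU hV hUn hVn
  by_cases hsub : ∀ x y : X, x = y
  · obtain ⟨u, hu⟩ := hUn
    obtain ⟨v, hv⟩ := hVn
    refine ⟨1, one_pos, ⟨iterN (kthSys f k) 1 u, ⟨u, hu, rfl⟩, ?_⟩⟩
    rw [hsub (iterN (kthSys f k) 1 u) v]
    exact hv
  · push_neg at hsub
    have hinf := open_infinite h hsub
    have hsurj := f_all_surj hf m hm hper hc h hinf
    have hbsurj := blockC_surj f hsurj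
    obtain ⟨n, hn, hhit⟩ := common_times f hf hc h (m * k) (fun _ => U)
      (fun t => (blockC f (t % m) (t / m)) ⁻¹' V)
      (fun _ _ => hU) (fun t _ => hV.preimage (blockC_cont f hf _ _))
      (fun _ _ => hUn)
      (fun t _ => by
        obtain ⟨v0, hv0⟩ := hVn
        obtain ⟨z, hz⟩ := hbsurj (t % m) (t / m) v0
        refine ⟨z, ?_⟩
        show blockC f (t % m) (t / m) z ∈ V
        rw [hz]; exact hv0)
    have hr : n % m < m := Nat.mod_lt _ hm
    obtain ⟨n', j, hn'0, hjk, hnk⟩ : ∃ n' j, 0 < n' ∧ j < k ∧ n' * k = n + j := by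
      rcases Nat.eq_zero_or_pos (n % k) with hq | hq
      · have hdvd : k ∣ n := Nat.dvd_of_mod_eq_zero hq
        refine ⟨n / k, 0, ?_, by omega, ?_⟩
        · exact Nat.div_pos (Nat.le_of_dvd hn hdvd) (by omega)
        · rw [Nat.div_mul_cancel hdvd]; omega
      · have h2 : n % k < k := Nat.mod_lt _ (by omega)
        refine ⟨n / k + 1, k - n % k, Nat.succ_pos _, by omega, ?_⟩
        have h1 := Nat.div_add_mod n k
        have h3 : (n / k + 1) * k = k * (n / k) + k := by ring
        rw [h3]
        generalize hgen : k * (n / k) = c at h1 ⊢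
        omega
    have ht1 : n % m + m * j < m * (j + 1) := by
      have h5 : m * (j + 1) = m + m * j := by ring
      rw [h5]
      omega
    have ht2 : m * (j + 1) ≤ m * k := Nat.mul_le_mul_left m (by omega)
    obtain ⟨y, ⟨x, hxU, rfl⟩, hyW⟩ := hhit (n % m + m * j) (lt_of_lt_of_le ht1 ht2)
    have htm : (n % m + m * j) % m = n % m := by
      rw [Nat.add_mul_mod_self_left, Nat.mod_eq_of_lt hr]
    have htd : (n % m + m * j) / m = j := by
      rw [Nat.add_mul_div_left _ _ hm, Nat.div_eq_of_lt hr, Nat.zero_add]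
    rw [Set.mem_preimage, htm, htd] at hyW
    refine ⟨n', hn'0, ⟨iterN (kthSys f k) n' x, ⟨x, hxU, rfl⟩, ?_⟩⟩
    rw [iterN_kthSys f k n' x, hnk, iterN_add f n j x, blockC_mod f m hm hper n j]
    exact hyW
end
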